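/- Let 𝒰 be a complex Hilbert space and let Ω be a strictly positive operator on ℓ²₊(𝒰) satisfying Ω ≤ S_𝒰* Ω S_𝒰. Then the closed linear span of the set { S_𝒰ⁿ Ω⁻¹ E_𝒰 u : n ≥ 0, u ∈ 𝒰 } equals ℓ²₊(𝒰). -/

import Mathlib

/- Statement 19 (Outerness / density, Lemma on Ω with Ω ≤ S*ΩS): Let Ω be a strictly
positive operator on ℓ²₊(𝒰) with Ω ≤ S_𝒰*ΩS_𝒰.  Then the closed linear span of
{ S_𝒰ⁿ Ω⁻¹ E_𝒰 u : n ≥ 0, u ∈ 𝒰 } is all of ℓ²₊(𝒰). -/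

open ContinuousLinearMap

noncomputable section

local notation "ℓ²(" X ")" => lp (fun _ : ℕ => X) 2

/-- A bounded operator on a Hilbert space is strictly positive if it is positive
(self-adjoint with non-negative quadratic form) and invertible. -/
def IsStrictlyPositiveOp {H : Type*} [NormedAddCommGroup H] [InnerProductSpace ℂ H]
    [CompleteSpace H] (T : H →L[ℂ] H) : Prop :=
  T.IsPositive ∧ IsUnit T

variable {𝒰 : Type*} [NormedAddCommGroup 𝒰] [InnerProductSpace ℂ 𝒰] [CompleteSpace 𝒰]


/-!
Let `y` be orthogonal to every `Sⁿ Ω⁻¹ E u` and put `zₙ = Ω⁻¹ S*ⁿ y`. Orthogonality says that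
the zeroth coordinate of every `zₙ` vanishes, i.e. `zₙ = S vₙ`. Since `Ω zₙ₊₁ = S* Ω S vₙ` and
`Ω ≤ S* Ω S`, expanding `⟪Ω (zₙ₊₁ - vₙ), zₙ₊₁ - vₙ⟫ ≥ 0` shows that `qₙ = ⟪Ω zₙ, zₙ⟫` is
nondecreasing. But `qₙ = ⟪S*ⁿ y, Ω⁻¹ S*ⁿ y⟫ ≤ ‖Ω⁻¹‖ ‖S*ⁿ y‖² → 0`, so `q₀ ≤ 0`, which for the
positive operator `Ω` forces `y = Ω z₀ = 0`.
-/

open Filter Topology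
open scoped InnerProductSpace

namespace ContinuousLinearMap

variable {H : Type*} [NormedAddCommGroup H] [InnerProductSpace ℂ H] [CompleteSpace H]

lemma inner_apply_eq_inner_sqrt {T : H →L[ℂ] H} (hT : 0 ≤ T) (x y : H) :
    ⟪T x, y⟫_ℂ = ⟪CFC.sqrt T x, CFC.sqrt T y⟫_ℂ := by
  conv_lhs => rw [← CFC.sqrt_mul_sqrt_self T hT]
  rw [mul_apply_eq_comp, ← adjoint_inner_right,
    (IsSelfAdjoint.of_nonneg (CFC.sqrt_nonneg T)).adjoint_eq]

lemma re_inner_apply_self_eq_norm_sqrt_sq {T : H →L[ℂ] H} (hT : 0 ≤ T) (x : H) :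
    RCLike.re ⟪T x, x⟫_ℂ = ‖CFC.sqrt T x‖ ^ 2 := by
  rw [inner_apply_eq_inner_sqrt hT, inner_self_eq_norm_sq]

lemma apply_eq_zero_of_re_inner_le_zero {T : H →L[ℂ] H} (hT : 0 ≤ T) {x : H}
    (hx : RCLike.re ⟪T x, x⟫_ℂ ≤ 0) : T x = 0 := by
  rw [re_inner_apply_self_eq_norm_sqrt_sq hT] at hx
  have hsqrt : CFC.sqrt T x = 0 := norm_eq_zero.1 (by nlinarith [norm_nonneg (CFC.sqrt T x)])
  rw [← CFC.sqrt_mul_sqrt_self T hT, mul_apply_eq_comp, hsqrt, map_zero]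

lemma re_inner_apply_self_le_of_apply_eq_adjoint {S Ω : H →L[ℂ] H} (hΩ : 0 ≤ Ω)
    (hle : Ω ≤ adjoint S ∘L Ω ∘L S) {v w : H} (hw : Ω w = adjoint S (Ω (S v))) :
    RCLike.re ⟪Ω (S v), S v⟫_ℂ ≤ RCLike.re ⟪Ω w, w⟫_ℂ := by
  set R := CFC.sqrt Ω
  have hv : RCLike.re ⟪Ω v, v⟫_ℂ ≤ RCLike.re ⟪Ω (S v), S v⟫_ℂ := by
    have := hle.re_inner_nonneg_left v
    rwa [sub_apply, inner_sub_left, map_sub, comp_apply, comp_apply, adjoint_inner_left,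
      sub_nonneg] at this
  have hcross : ⟪R w, R v⟫_ℂ = ⟪Ω (S v), S v⟫_ℂ := by
    rw [← inner_apply_eq_inner_sqrt hΩ, hw, adjoint_inner_left]
  have hexpand := norm_sub_sq (𝕜 := ℂ) (R w) (R v)
  rw [hcross] at hexpand
  rw [re_inner_apply_self_eq_norm_sqrt_sq hΩ v] at hv
  rw [re_inner_apply_self_eq_norm_sqrt_sq hΩ w]
  nlinarith [sq_nonneg ‖R w - R v‖]

theorem eq_zero_of_inverse_adjoint_pow_mem_range {S Ω : H →L[ℂ] H} (hΩ : 0 ≤ Ω)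
    (hΩu : IsUnit Ω) (hle : Ω ≤ adjoint S ∘L Ω ∘L S) {y : H}
    (hrange : ∀ n, Ring.inverse Ω ((adjoint S ^ n) y) ∈ Set.range S)
    (hlim : Tendsto (fun n ↦ (adjoint S ^ n) y) atTop (𝓝 0)) : y = 0 := by
  set z : ℕ → H := fun n ↦ Ring.inverse Ω ((adjoint S ^ n) y)
  have hΩz (n : ℕ) : Ω (z n) = (adjoint S ^ n) y := by
    rw [← mul_apply_eq_comp, Ring.mul_inverse_cancel Ω hΩu, one_apply_eq_self]
  set q : ℕ → ℝ := fun n ↦ RCLike.re ⟪Ω (z n), z n⟫_ℂ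
  have hmono : Monotone q := monotone_nat_of_le_succ fun n ↦ by
    obtain ⟨v, hv : S v = z n⟩ := hrange n
    show RCLike.re ⟪Ω (z n), z n⟫_ℂ ≤ RCLike.re ⟪Ω (z (n + 1)), z (n + 1)⟫_ℂ
    rw [← hv]
    refine re_inner_apply_self_le_of_apply_eq_adjoint hΩ hle ?_
    rw [hv, hΩz, hΩz, pow_succ', mul_apply_eq_comp]
  have hbound (n : ℕ) : q n ≤ ‖Ring.inverse Ω‖ * ‖(adjoint S ^ n) y‖ ^ 2 := by
    calc q n = RCLike.re ⟪(adjoint S ^ n) y, z n⟫_ℂ := by rw [← hΩz]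
      _ ≤ ‖(adjoint S ^ n) y‖ * ‖z n‖ := (RCLike.re_le_norm _).trans (norm_inner_le_norm _ _)
      _ ≤ ‖(adjoint S ^ n) y‖ * (‖Ring.inverse Ω‖ * ‖(adjoint S ^ n) y‖) := by
          gcongr; exact le_opNorm _ _
      _ = ‖Ring.inverse Ω‖ * ‖(adjoint S ^ n) y‖ ^ 2 := by ring
  have hq0 : q 0 ≤ 0 := by
    have hlim' := ((hlim.norm.pow 2).const_mul ‖Ring.inverse Ω‖)
    rw [norm_zero, zero_pow two_ne_zero, mul_zero] at hlim'
    exact ge_of_tendsto' hlim' fun n ↦ (hmono n.zero_le).trans (hbound n)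
  simpa only [hΩz, pow_zero, one_apply_eq_self] using apply_eq_zero_of_re_inner_le_zero hΩ hq0

end ContinuousLinearMap

section Shift

variable {V : Type*} [NormedAddCommGroup V] [InnerProductSpace ℂ V]

structure IsUnilateralShift (S : ℓ²(V) →L[ℂ] ℓ²(V)) : Prop where
  apply_zero : ∀ x, S x 0 = 0
  apply_succ : ∀ x n, S x (n + 1) = x n

namespace IsUnilateralShift

variable {S : ℓ²(V) →L[ℂ] ℓ²(V)}

lemma apply_single (hS : IsUnilateralShift S) (k : ℕ) (u : V) :
    S (lp.single 2 k u) = lp.single 2 (k + 1) u := by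
  ext (_ | j)
  · rw [hS.apply_zero, lp.single_apply_ne 2 _ _ (by omega)]
  · rw [hS.apply_succ]
    obtain rfl | hj := eq_or_ne j k
    · rw [lp.single_apply_self, lp.single_apply_self]
    · rw [lp.single_apply_ne 2 _ _ hj, lp.single_apply_ne 2 _ _ (by omega)]

lemma adjoint_apply [CompleteSpace V] (hS : IsUnilateralShift S) (x : ℓ²(V)) (k : ℕ) :
    adjoint S x k = x (k + 1) :=
  ext_inner_left ℂ fun u ↦ calc
    ⟪u, adjoint S x k⟫_ℂ = ⟪lp.single 2 k u, adjoint S x⟫_ℂ :=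
      (lp.inner_single_left (G := fun _ ↦ V) k u _).symm
    _ = ⟪lp.single 2 (k + 1) u, x⟫_ℂ := by rw [adjoint_inner_right, hS.apply_single]
    _ = ⟪u, x (k + 1)⟫_ℂ := lp.inner_single_left (G := fun _ ↦ V) _ u x

lemma adjoint_pow_apply [CompleteSpace V] (hS : IsUnilateralShift S) (n : ℕ) (x : ℓ²(V))
    (k : ℕ) :
    (adjoint S ^ n) x k = x (k + n) := by
  induction n generalizing x with
  | zero => rfl
  | succ n ih => rw [pow_succ, mul_apply_eq_comp, ih, hS.adjoint_apply, add_assoc]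

lemma tendsto_adjoint_pow [CompleteSpace V] (hS : IsUnilateralShift S) (x : ℓ²(V)) :
    Tendsto (fun n ↦ (adjoint S ^ n) x) atTop (𝓝 0) := by
  have hnorm (n : ℕ) : ‖(adjoint S ^ n) x‖ ^ 2 = ∑' k, ‖x (k + n)‖ ^ 2 := by
    simpa only [ENNReal.toReal_ofNat, Real.rpow_two, hS.adjoint_pow_apply]
      using lp.norm_rpow_eq_tsum (p := 2) (by norm_num) ((adjoint S ^ n) x)
  have htail := (tendsto_sum_nat_add fun k ↦ ‖x k‖ ^ 2).sqrt
  simp_rw [← hnorm, Real.sqrt_sq (norm_nonneg _), Real.sqrt_zero] at htail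
  exact tendsto_zero_iff_norm_tendsto_zero.2 htail

lemma mem_range_of_apply_zero [CompleteSpace V] (hS : IsUnilateralShift S) {w : ℓ²(V)}
    (hw : w 0 = 0) : w ∈ Set.range S :=
  ⟨adjoint S w, by
    ext (_ | k)
    · rw [hS.apply_zero, hw]
    · rw [hS.apply_succ, hS.adjoint_apply]⟩

end IsUnilateralShift

lemma inner_embedding_left {E : V →L[ℂ] ℓ²(V)} (hE0 : ∀ u, E u 0 = u)
    (hE1 : ∀ u n, E u (n + 1) = 0) (u : V) (x : ℓ²(V)) : ⟪E u, x⟫_ℂ = ⟪u, x 0⟫_ℂ := by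
  have hsingle : E u = lp.single 2 0 u := by
    ext (_ | n)
    · rw [hE0, lp.single_apply_self]
    · rw [hE1, lp.single_apply_ne 2 _ _ (by omega)]
  rw [hsingle]
  exact lp.inner_single_left (G := fun _ ↦ V) 0 u x

end Shift

theorem outer_density_of_shifted_inverse
    -- the unilateral forward shift and the embedding onto the zeroth coordinate
    (S𝒰 : ℓ²(𝒰) →L[ℂ] ℓ²(𝒰))
    (hS𝒰0 : ∀ x : ℓ²(𝒰), S𝒰 x 0 = 0)
    (hS𝒰1 : ∀ (x : ℓ²(𝒰)) (n : ℕ), S𝒰 x (n + 1) = x n)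
    (E𝒰 : 𝒰 →L[ℂ] ℓ²(𝒰))
    (hE𝒰0 : ∀ u : 𝒰, E𝒰 u 0 = u) (hE𝒰1 : ∀ (u : 𝒰) (n : ℕ), E𝒰 u (n + 1) = 0)
    -- Ω strictly positive with Ω ≤ S*ΩS
    (Ω : ℓ²(𝒰) →L[ℂ] ℓ²(𝒰))
    (hΩ : IsStrictlyPositiveOp Ω)
    (hle : ((adjoint S𝒰).comp (Ω.comp S𝒰) - Ω).IsPositive) :
    (Submodule.span ℂ
        {x : ℓ²(𝒰) | ∃ (n : ℕ) (u : 𝒰),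
          x = (S𝒰 ^ n) ((Ring.inverse Ω) (E𝒰 u))}).topologicalClosure = ⊤ := by
  obtain ⟨hΩpos, hΩunit⟩ := hΩ
  have hS : IsUnilateralShift S𝒰 := ⟨hS𝒰0, hS𝒰1⟩
  have hΩinv : adjoint (Ring.inverse Ω) = Ring.inverse Ω :=
    hΩpos.isSelfAdjoint.ringInverse.adjoint_eq
  rw [Submodule.topologicalClosure_eq_top_iff, Submodule.eq_bot_iff]
  intro y hy
  refine eq_zero_of_inverse_adjoint_pow_mem_range ((nonneg_iff_isPositive Ω).2 hΩpos) hΩunit hle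
    (fun n ↦ hS.mem_range_of_apply_zero (ext_inner_left ℂ fun (u : 𝒰) ↦ ?_))
    (hS.tendsto_adjoint_pow y)
  calc ⟪u, Ring.inverse Ω ((adjoint S𝒰 ^ n) y) 0⟫_ℂ
      = ⟪E𝒰 u, Ring.inverse Ω ((adjoint S𝒰 ^ n) y)⟫_ℂ :=
        (inner_embedding_left hE𝒰0 hE𝒰1 _ _).symm
    _ = ⟪Ring.inverse Ω (E𝒰 u), (adjoint S𝒰 ^ n) y⟫_ℂ := by
      simpa only [hΩinv] using adjoint_inner_right (Ring.inverse Ω) (E𝒰 u) ((adjoint S𝒰 ^ n) y)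
    _ = ⟪(S𝒰 ^ n) (Ring.inverse Ω (E𝒰 u)), y⟫_ℂ := by
      simpa only [← star_eq_adjoint, star_pow] using adjoint_inner_right (S𝒰 ^ n) _ y
    _ = ⟪u, 0⟫_ℂ := by
      rw [inner_zero_right]
      exact (Submodule.mem_orthogonal _ _).1 hy _ (Submodule.subset_span ⟨n, u, rfl⟩)
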